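/- For all real r and a with -1 < r < -1/2 and a > 0, ∫₀^∞ t^r e^{a² t} · erfc(a√t) dt = (2a · Γ(r+1) / π) · ∫₀^∞ ds / (s^{2r+2} (s² + a²)). -/

import Mathlib

/-!
Craig's formula `erfc (a√t) = (2a/π) ∫₀^∞ e^{-(s²+a²)t} / (s²+a²) ds` absorbs the factor
`e^{a²t}` and turns the left-hand side into the double integral of the nonnegative kernel
`t^r e^{-s²t} / (s²+a²)`. Integrating in `t` first gives `Γ(r+1) / (s^{2r+2} (s²+a²))` by the
Gamma integral, which is integrable on `(0, ∞)` because `0 < 2r+2 < 1`; so Fubini applies and the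
right-hand side appears.
-/

open Real MeasureTheory Set

/-- Lower incomplete gamma function `γ(s,x) = ∫₀ˣ u^(s-1) e^(-u) du`. -/
noncomputable def lowerGamma (s x : ℝ) : ℝ := ∫ u in (0:ℝ)..x, u ^ (s - 1) * Real.exp (-u)

/-- Error function `erf x = (2/√π) ∫₀ˣ e^(-u²) du`. -/
noncomputable def erf (x : ℝ) : ℝ := (2 / Real.sqrt π) * ∫ u in (0:ℝ)..x, Real.exp (-u ^ 2)

/-- Complementary error function. -/
noncomputable def erfc (x : ℝ) : ℝ := 1 - erf x

open Filter Topology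

theorem erfc_eq_integral_Ioi (x : ℝ) :
    erfc x = 2 / √π * ∫ v in Ioi x, exp (-v ^ 2) := by
  have hint (c : ℝ) : IntegrableOn (fun v : ℝ => exp (-v ^ 2)) (Ioi c) := by
    simpa using (integrable_exp_neg_mul_sq one_pos).integrableOn
  have htail : ∫ v in Ioi (0 : ℝ), exp (-v ^ 2) = √π / 2 := by
    simpa using integral_gaussian_Ioi 1
  rw [erfc, erf, ← intervalIntegral.integral_Ioi_sub_Ioi' (hint 0) (hint x), htail]
  field_simp
  ring

theorem integral_Ioi_mul_exp_neg_mul_sq {k : ℝ} (hk : 0 < k) (c : ℝ) :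
    ∫ v in Ioi c, v * exp (-k * v ^ 2) = exp (-k * c ^ 2) / (2 * k) := by
  have hderiv (v : ℝ) : HasDerivAt (fun v => exp (-k * v ^ 2) / -(2 * k))
      (v * exp (-k * v ^ 2)) v :=
    (((hasDerivAt_pow 2 v).const_mul (-k)).exp.div_const _).congr_deriv (by field_simp; ring)
  have hlim : Tendsto (fun v => exp (-k * v ^ 2) / -(2 * k)) atTop (𝓝 0) := by
    have : Tendsto (fun v : ℝ => -k * v ^ 2) atTop atBot :=
      (tendsto_pow_atTop two_ne_zero).const_mul_atTop_of_neg (by linarith)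
    simpa using (tendsto_exp_atBot.comp this).div_const (-(2 * k))
  rw [integral_Ioi_of_hasDerivAt_of_tendsto' (fun v _ => hderiv v)
    (integrable_mul_exp_neg_mul_sq hk).integrableOn hlim]
  ring

theorem integral_integral_swap_of_nonneg {α β : Type*} [MeasurableSpace α] [MeasurableSpace β]
    {μ : Measure α} {ν : Measure β} [SFinite μ] [SFinite ν] {f : α → β → ℝ}
    (hf : AEStronglyMeasurable (Function.uncurry f) (μ.prod ν))
    (hf_nonneg : ∀ᵐ x ∂μ, ∀ᵐ y ∂ν, 0 ≤ f x y) (hf_sec : ∀ᵐ x ∂μ, Integrable (f x) ν)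
    (hf_int : Integrable (fun x => ∫ y, f x y ∂ν) μ) :
    ∫ x, ∫ y, f x y ∂ν ∂μ = ∫ y, ∫ x, f x y ∂μ ∂ν := by
  refine integral_integral_swap ((integrable_prod_iff hf).2 ⟨hf_sec, hf_int.congr ?_⟩)
  filter_upwards [hf_nonneg] with x hx
  exact integral_congr_ae (by filter_upwards [hx] with y hy using (norm_of_nonneg hy).symm)

/-- Writing `k = s ^ 2 + a ^ 2`, the integrand is `2 ∫_{v > y} v e^{-k v²} dv`; after exchanging
the integrals the `s`-integral is Gaussian. -/
theorem integral_Ioi_exp_div_sq_add_sq {a y : ℝ} (ha : 0 < a) (hy : 0 < y) :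
    ∫ s in Ioi 0, exp (-(s ^ 2 + a ^ 2) * y ^ 2) / (s ^ 2 + a ^ 2)
      = √π * ∫ v in Ioi y, exp (-(a * v) ^ 2) := by
  set K : ℝ → ℝ → ℝ := fun s v => v * exp (-(s ^ 2 + a ^ 2) * v ^ 2) with hK
  have hk (s : ℝ) : 0 < s ^ 2 + a ^ 2 := by positivity
  have hinner (s : ℝ) :
      ∫ v in Ioi y, K s v = exp (-(s ^ 2 + a ^ 2) * y ^ 2) / (2 * (s ^ 2 + a ^ 2)) :=
    integral_Ioi_mul_exp_neg_mul_sq (hk s) y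
  have hgauss : ∀ v ∈ Ioi y, ∫ s in Ioi 0, K s v = √π / 2 * exp (-(a * v) ^ 2) := by
    intro v hv
    have hv : 0 < v := hy.trans hv
    have hKv (s : ℝ) : K s v = v * exp (-(a * v) ^ 2) * exp (-v ^ 2 * s ^ 2) := by
      rw [hK, mul_assoc, ← exp_add]
      ring_nf
    simp_rw [hKv, integral_const_mul, integral_gaussian_Ioi, sqrt_div' _ (sq_nonneg v),
      sqrt_sq hv.le]
    field_simp
  have hswap : ∫ s in Ioi 0, ∫ v in Ioi y, K s v = ∫ v in Ioi y, ∫ s in Ioi 0, K s v := by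
    refine integral_integral_swap_of_nonneg (by fun_prop) ?_ ?_ ?_
    · refine Eventually.of_forall fun s => ?_
      filter_upwards [ae_restrict_mem measurableSet_Ioi] with v hv
      have : 0 < v := hy.trans hv
      positivity
    · exact Eventually.of_forall fun s => (integrable_mul_exp_neg_mul_sq (hk s)).integrableOn
    · simp_rw [hinner]
      refine Integrable.mono' ((integrable_exp_neg_mul_sq (pow_pos hy 2)).const_mul
        (2 * a ^ 2)⁻¹).integrableOn ?_ (Eventually.of_forall fun s => ?_)
      · exact (Continuous.div (by fun_prop) (by fun_prop)
          fun s => (mul_pos two_pos (hk s)).ne').aestronglyMeasurable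
      · rw [norm_of_nonneg (by positivity), div_eq_inv_mul]
        exact mul_le_mul (inv_anti₀ (by positivity) (by nlinarith)) (exp_le_exp.2 (by nlinarith))
          (by positivity) (by positivity)
  calc _ = ∫ s in Ioi 0, 2 * ∫ v in Ioi y, K s v := by
        congr 1; ext s; rw [hinner]; field_simp
    _ = √π * ∫ v in Ioi y, exp (-(a * v) ^ 2) := by
        rw [integral_const_mul, hswap, setIntegral_congr_fun measurableSet_Ioi hgauss,
          integral_const_mul]
        ring

/-- For `a = 1` this is Craig's formula. -/
theorem erfc_mul_eq_integral_Ioi {a y : ℝ} (ha : 0 < a) (hy : 0 < y) :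
    erfc (a * y) = 2 * a / π * ∫ s in Ioi 0, exp (-(s ^ 2 + a ^ 2) * y ^ 2) / (s ^ 2 + a ^ 2) := by
  rw [integral_Ioi_exp_div_sq_add_sq ha hy, erfc_eq_integral_Ioi,
    integral_comp_mul_left_Ioi (fun w => exp (-w ^ 2)) y ha, smul_eq_mul]
  field_simp
  rw [sq_sqrt pi_pos.le]
  ring

theorem integral_rpow_mul_exp_neg_sq_mul_Ioi {r s : ℝ} (hr : -1 < r) (hs : 0 < s) :
    ∫ t in Ioi 0, t ^ r * exp (-(s ^ 2 * t)) = Gamma (r + 1) / s ^ (2 * r + 2) := by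
  have h := integral_rpow_mul_exp_neg_mul_Ioi (by linarith : 0 < r + 1) (pow_pos hs 2)
  rw [add_sub_cancel_right] at h
  rw [h, div_rpow zero_le_one (by positivity), one_rpow, ← rpow_natCast, ← rpow_mul hs.le]
  push_cast
  ring_nf

theorem integrableOn_rpow_mul_exp_neg_sq_mul {r s : ℝ} (hr : -1 < r) (hs : 0 < s) :
    IntegrableOn (fun t => t ^ r * exp (-(s ^ 2 * t))) (Ioi 0) :=
  (integrableOn_rpow_mul_exp_neg_mul_rpow hr one_pos (pow_pos hs 2)).congr_fun
    (fun t _ => by simp only [rpow_one, neg_mul]) measurableSet_Ioi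

theorem integrableOn_one_div_rpow_mul_sq_add_sq {q a : ℝ} (hq : -1 < q) (hq' : q < 1)
    (ha : a ≠ 0) : IntegrableOn (fun s => 1 / (s ^ q * (s ^ 2 + a ^ 2))) (Ioi 0) := by
  have ha2 : 0 < a ^ 2 := by positivity
  have hmeas : AEStronglyMeasurable (fun s : ℝ => 1 / (s ^ q * (s ^ 2 + a ^ 2))) :=
    (measurable_const.div ((measurable_id.pow_const q).mul (by fun_prop))).aestronglyMeasurable
  rw [← Ioc_union_Ioi_eq_Ioi zero_le_one]
  refine IntegrableOn.union ?_ ?_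
  · have hint : IntegrableOn (fun s : ℝ => (a ^ 2)⁻¹ * s ^ (-q)) (Ioc 0 1) :=
      ((intervalIntegrable_iff_integrableOn_Ioc_of_le zero_le_one).1
        (intervalIntegral.intervalIntegrable_rpow' (by linarith))).const_mul _
    refine hint.mono' hmeas.restrict ?_
    filter_upwards [ae_restrict_mem measurableSet_Ioc] with s hs
    have hs0 : 0 < s := hs.1
    rw [norm_of_nonneg (by positivity), rpow_neg hs0.le, one_div, mul_inv, mul_comm]
    gcongr
    nlinarith
  · have hint : IntegrableOn (fun s : ℝ => s ^ (-q - 2)) (Ioi 1) :=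
      integrableOn_Ioi_rpow_of_lt (by linarith) one_pos
    refine hint.mono' hmeas.restrict ?_
    filter_upwards [ae_restrict_mem measurableSet_Ioi] with s hs
    have hs0 : 0 < s := zero_lt_one.trans hs
    rw [norm_of_nonneg (by positivity), rpow_sub hs0, rpow_neg hs0.le, rpow_two, one_div,
      mul_inv, div_eq_mul_inv]
    gcongr
    nlinarith

theorem stmt_16 (r a : ℝ) (hr : -1 < r) (hr' : r < -(1 / 2)) (ha : 0 < a) :
    ∫ t in Ioi (0:ℝ), t ^ r * Real.exp (a ^ 2 * t) * erfc (a * Real.sqrt t)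
      = (2 * a * Real.Gamma (r + 1) / π)
          * ∫ s in Ioi (0:ℝ), 1 / (s ^ (2 * r + 2) * (s ^ 2 + a ^ 2)) := by
  set F : ℝ → ℝ → ℝ := fun s t => t ^ r * exp (-(s ^ 2 * t)) / (s ^ 2 + a ^ 2) with hF
  have hpointwise : ∀ t ∈ Ioi (0 : ℝ), t ^ r * exp (a ^ 2 * t) * erfc (a * √t)
      = 2 * a / π * ∫ s in Ioi 0, F s t := by
    intro t ht
    rw [erfc_mul_eq_integral_Ioi ha (sqrt_pos.2 ht), sq_sqrt ht.le, mul_left_comm,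
      ← integral_const_mul]
    congr 1
    refine setIntegral_congr_fun measurableSet_Ioi fun s _ => ?_
    rw [hF, mul_div_assoc', mul_assoc, ← exp_add]
    ring_nf
  have hinner : ∀ s ∈ Ioi (0 : ℝ),
      ∫ t in Ioi 0, F s t = Gamma (r + 1) * (1 / (s ^ (2 * r + 2) * (s ^ 2 + a ^ 2))) := by
    intro s hs
    rw [hF, integral_div, integral_rpow_mul_exp_neg_sq_mul_Ioi hr hs]
    field_simp
  have hswap : ∫ s in Ioi 0, ∫ t in Ioi 0, F s t = ∫ t in Ioi 0, ∫ s in Ioi 0, F s t := by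
    refine integral_integral_swap_of_nonneg ?_ ?_ ?_ ?_
    · exact (((measurable_snd.pow_const r).mul (by fun_prop)).div
        (by fun_prop)).aestronglyMeasurable
    · filter_upwards [ae_restrict_mem measurableSet_Ioi] with s hs
      filter_upwards [ae_restrict_mem measurableSet_Ioi] with t ht
      exact div_nonneg (mul_nonneg (rpow_nonneg ht.le r) (exp_pos _).le) (by positivity)
    · filter_upwards [ae_restrict_mem measurableSet_Ioi] with s hs
      exact (integrableOn_rpow_mul_exp_neg_sq_mul hr hs).div_const _
    · have h := (integrableOn_one_div_rpow_mul_sq_add_sq (q := 2 * r + 2) (by linarith)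
        (by linarith) ha.ne').const_mul (Gamma (r + 1))
      exact IntegrableOn.congr_fun h (fun s hs => (hinner s hs).symm) measurableSet_Ioi
  calc ∫ t in Ioi 0, t ^ r * exp (a ^ 2 * t) * erfc (a * √t)
      = 2 * a / π * ∫ s in Ioi 0, ∫ t in Ioi 0, F s t := by
        rw [setIntegral_congr_fun measurableSet_Ioi hpointwise, integral_const_mul, hswap]
    _ = _ := by
        rw [setIntegral_congr_fun measurableSet_Ioi hinner, integral_const_mul]
        ring
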